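/- arXiv:0905.2248 — 6 statements merged into one kernel-verified Lean document; each statement's English description precedes it below -/
import Mathlib

section
/- Let n ≥ 2. The following are equivalent: (a) for all indices i ≠ j in {1,…,n}, the four columns v_{i,1}, v_{i,2}, v_{j,1}, v_{j,2} of H are linearly independent over F; (b) the syndrome map E ↦ H·E is injective on the set of vectors E ∈ F^{2n} of pair-weight at most 1 (i.e., whenever E₁ and E₂ each have pair-weight at most 1 and H·E₁ = H·E₂, then E₁ = E₂). (This is the decodability criterion of Theorem 1 for a single primary-path error.) -/
lemma supp_lemma {F : Type*} [Field F] [DecidableEq F] {n : ℕ} (hn : 0 < n)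
    (E : Fin n × Fin 2 → F)
    (h : (Finset.univ.filter (fun i : Fin n => E (i, 0) ≠ 0 ∨ E (i, 1) ≠ 0)).card ≤ 1) :
    ∃ i : Fin n, ∀ k : Fin n, k ≠ i → E (k, 0) = 0 ∧ E (k, 1) = 0 := by
  set S := Finset.univ.filter (fun i : Fin n => E (i, 0) ≠ 0 ∨ E (i, 1) ≠ 0) with hS
  rcases S.eq_empty_or_nonempty with he | ⟨i, hi⟩
  · refine ⟨⟨0, hn⟩, fun k _ => ?_⟩
    have hk : k ∉ S := by simp [he]
    simp only [hS, Finset.mem_filter, Finset.mem_univ, true_and] at hk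
    push_neg at hk; exact hk
  · refine ⟨i, fun k hk => ?_⟩
    have hk' : k ∉ S := fun hkS => hk (Finset.card_le_one.mp h k hkS i hi)
    simp only [hS, Finset.mem_filter, Finset.mem_univ, true_and] at hk'
    push_neg at hk'; exact hk'

lemma mulVec_supp {F : Type*} [Field F] {n M : ℕ}
    (H : Matrix (Fin M) (Fin n × Fin 2) F) (E : Fin n × Fin 2 → F) (i : Fin n)
    (h : ∀ k : Fin n, k ≠ i → E (k, 0) = 0 ∧ E (k, 1) = 0) :
    H.mulVec E = fun r => H r (i, 0) * E (i, 0) + H r (i, 1) * E (i, 1) := by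
  funext r
  rw [Matrix.mulVec, dotProduct, Fintype.sum_prod_type]
  rw [Finset.sum_eq_single i]
  · simp [Fin.sum_univ_two]
  · intro k _ hk
    have := h k hk
    simp [Fin.sum_univ_two, this.1, this.2]
  · simp

/-- **Theorem 1 (single primary-path error decodability).**
`H` is an `M × 2n` matrix over a field `F` with columns indexed by pairs `(i, s)`,
`i ∈ {1,…,n}`, `s ∈ {1,2}`.  The following are equivalent:
(a) for all `i ≠ j` the four columns `v_{i,1}, v_{i,2}, v_{j,1}, v_{j,2}` are
linearly independent;
(b) the syndrome map `E ↦ H·E` is injective on the set of vectors of pair-weight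
at most `1`. -/
theorem single_error_decodability
    (F : Type*) [Field F] [DecidableEq F] (n M : ℕ) (hn : 2 ≤ n) (hM : 0 < M)
    (H : Matrix (Fin M) (Fin n × Fin 2) F) :
    (∀ i j : Fin n, i ≠ j →
      LinearIndependent F
        ![(fun r => H r (i, 0) : Fin M → F), (fun r => H r (i, 1) : Fin M → F),
          (fun r => H r (j, 0) : Fin M → F), (fun r => H r (j, 1) : Fin M → F)]) ↔
    (∀ E₁ E₂ : Fin n × Fin 2 → F,
      (Finset.univ.filter (fun i : Fin n => E₁ (i, 0) ≠ 0 ∨ E₁ (i, 1) ≠ 0)).card ≤ 1 →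
      (Finset.univ.filter (fun i : Fin n => E₂ (i, 0) ≠ 0 ∨ E₂ (i, 1) ≠ 0)).card ≤ 1 →
      H.mulVec E₁ = H.mulVec E₂ → E₁ = E₂) := by
  have hn0 : 0 < n := by omega
  constructor
  · intro hli E₁ E₂ h1 h2 heq
    obtain ⟨i, hi⟩ := supp_lemma hn0 E₁ h1
    obtain ⟨j, hj⟩ := supp_lemma hn0 E₂ h2
    have hm1 := mulVec_supp H E₁ i hi
    have hm2 := mulVec_supp H E₂ j hj
    by_cases hij : i = j
    · subst hij
      have hnt : Nontrivial (Fin n) := Fin.nontrivial_iff_two_le.mpr hn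
      obtain ⟨j, hj'⟩ := exists_ne i
      have hli' := (Fintype.linearIndependent_iff.mp (hli i j (Ne.symm hj')))
        ![E₁ (i,0) - E₂ (i,0), E₁ (i,1) - E₂ (i,1), 0, 0]
      have hz : ∀ k, (![E₁ (i,0) - E₂ (i,0), E₁ (i,1) - E₂ (i,1), 0, 0] : Fin 4 → F) k = 0 := by
        apply hli'
        funext r
        have := congrFun heq r
        rw [hm1, hm2] at this
        simp only [Fin.sum_univ_four]
        simp only [Matrix.cons_val_zero, Matrix.cons_val_one, Matrix.head_cons,
          Matrix.cons_val_two, Matrix.tail_cons, Matrix.cons_val_three,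
          Pi.add_apply, Pi.smul_apply, smul_eq_mul, Pi.zero_apply]
        ring_nf
        ring_nf at this
        linear_combination this
      have h0 := hz 0
      have h1' := hz 1
      simp only [Matrix.cons_val_zero, Matrix.cons_val_one, Matrix.head_cons] at h0 h1'
      funext p
      obtain ⟨k, s⟩ := p
      by_cases hki : k = i
      · subst hki
        fin_cases s
        · show E₁ (k, 0) = E₂ (k, 0); exact sub_eq_zero.mp h0
        · show E₁ (k, 1) = E₂ (k, 1); exact sub_eq_zero.mp h1'
      · fin_cases s
        · show E₁ (k, 0) = E₂ (k, 0); rw [(hi k hki).1, (hj k hki).1]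
        · show E₁ (k, 1) = E₂ (k, 1); rw [(hi k hki).2, (hj k hki).2]
    · have hli' := (Fintype.linearIndependent_iff.mp (hli i j hij))
        ![E₁ (i,0), E₁ (i,1), -E₂ (j,0), -E₂ (j,1)]
      have hz : ∀ k, (![E₁ (i,0), E₁ (i,1), -E₂ (j,0), -E₂ (j,1)] : Fin 4 → F) k = 0 := by
        apply hli'
        funext r
        have := congrFun heq r
        rw [hm1, hm2] at this
        simp only [Fin.sum_univ_four]
        simp only [Matrix.cons_val_zero, Matrix.cons_val_one, Matrix.head_cons,
          Matrix.cons_val_two, Matrix.tail_cons, Matrix.cons_val_three,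
          Pi.add_apply, Pi.smul_apply, smul_eq_mul, Pi.zero_apply]
        linear_combination this
      have e10 := hz 0; have e11 := hz 1; have e20 := hz 2; have e21 := hz 3
      simp only [Matrix.cons_val_zero, Matrix.cons_val_one, Matrix.head_cons,
        Matrix.cons_val_two, Matrix.tail_cons, Matrix.cons_val_three, neg_eq_zero] at e10 e11 e20 e21
      have hz1 : ∀ p, E₁ p = 0 := by
        rintro ⟨k, s⟩
        by_cases hki : k = i
        · subst hki
          fin_cases s
          · show E₁ (k, 0) = 0; exact e10
          · show E₁ (k, 1) = 0; exact e11
        · fin_cases s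
          · show E₁ (k, 0) = 0; exact (hi k hki).1
          · show E₁ (k, 1) = 0; exact (hi k hki).2
      have hz2 : ∀ p, E₂ p = 0 := by
        rintro ⟨k, s⟩
        by_cases hkj : k = j
        · subst hkj
          fin_cases s
          · show E₂ (k, 0) = 0; exact e20
          · show E₂ (k, 1) = 0; exact e21
        · fin_cases s
          · show E₂ (k, 0) = 0; exact (hj k hkj).1
          · show E₂ (k, 1) = 0; exact (hj k hkj).2
      funext p
      rw [hz1 p, hz2 p]
  · intro hinj i j hij
    rw [Fintype.linearIndependent_iff]
    intro g hg
    set E₁ : Fin n × Fin 2 → F := fun p => if p.1 = i then (if p.2 = 0 then g 0 else g 1) else 0 with hE₁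
    set E₂ : Fin n × Fin 2 → F := fun p => if p.1 = j then (if p.2 = 0 then -g 2 else -g 3) else 0 with hE₂
    have hsupp1 : ∀ k : Fin n, k ≠ i → E₁ (k, 0) = 0 ∧ E₁ (k, 1) = 0 := by
      intro k hk; simp [hE₁, hk]
    have hsupp2 : ∀ k : Fin n, k ≠ j → E₂ (k, 0) = 0 ∧ E₂ (k, 1) = 0 := by
      intro k hk; simp [hE₂, hk]
    have hc1 : (Finset.univ.filter (fun k : Fin n => E₁ (k, 0) ≠ 0 ∨ E₁ (k, 1) ≠ 0)).card ≤ 1 := by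
      apply Finset.card_le_one.mpr
      intro a ha b hb
      simp only [Finset.mem_filter, Finset.mem_univ, true_and] at ha hb
      have hai : a = i := by
        by_contra h; rcases ha with h' | h' <;> [exact h' (hsupp1 a h).1; exact h' (hsupp1 a h).2]
      have hbi : b = i := by
        by_contra h; rcases hb with h' | h' <;> [exact h' (hsupp1 b h).1; exact h' (hsupp1 b h).2]
      rw [hai, hbi]
    have hc2 : (Finset.univ.filter (fun k : Fin n => E₂ (k, 0) ≠ 0 ∨ E₂ (k, 1) ≠ 0)).card ≤ 1 := by
      apply Finset.card_le_one.mpr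
      intro a ha b hb
      simp only [Finset.mem_filter, Finset.mem_univ, true_and] at ha hb
      have hai : a = j := by
        by_contra h; rcases ha with h' | h' <;> [exact h' (hsupp2 a h).1; exact h' (hsupp2 a h).2]
      have hbi : b = j := by
        by_contra h; rcases hb with h' | h' <;> [exact h' (hsupp2 b h).1; exact h' (hsupp2 b h).2]
      rw [hai, hbi]
    have hmv : H.mulVec E₁ = H.mulVec E₂ := by
      rw [mulVec_supp H E₁ i hsupp1, mulVec_supp H E₂ j hsupp2]
      funext r
      have := congrFun hg r
      simp only [Fin.sum_univ_four, Matrix.cons_val_zero, Matrix.cons_val_one, Matrix.head_cons,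
        Matrix.cons_val_two, Matrix.tail_cons, Matrix.cons_val_three,
        Pi.add_apply, Pi.smul_apply, smul_eq_mul, Pi.zero_apply] at this
      simp only [hE₁, hE₂, if_pos rfl]
      norm_num
      linear_combination this
    have heq := hinj E₁ E₂ hc1 hc2 hmv
    intro k
    have h0 := congrFun heq (i, 0)
    have h1 := congrFun heq (i, 1)
    have h2 := congrFun heq (j, 0)
    have h3 := congrFun heq (j, 1)
    simp only [hE₁, hE₂, if_pos rfl, if_neg hij, if_neg (Ne.symm hij)] at h0 h1 h2 h3
    norm_num at h0 h1 h2 h3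
    fin_cases k
    · exact h0
    · exact h1
    · exact h2
    · exact h3
end

section
/- Let F be a field and let γ and δ be two distinct nonzero elements of F. Then for every l ∈ {1, 2, 3, 4}, the three vectors (1, γ, γ², γ³), (1, δ, δ², δ³), and the l-th standard basis vector e_l of F^4 are linearly independent. (Hence the Vandermonde coefficient assignment satisfies the protection-path-error condition (14) of Theorem 2.) -/
/-- **Vandermonde assignment vs. protection-path errors.** For distinct nonzero
`γ, δ` in a field `F` and every `l ∈ {1,2,3,4}`, the three vectors
`(1,γ,γ²,γ³)`, `(1,δ,δ²,δ³)` and the `l`-th standard basis vector `e_l` of `F^4`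
are linearly independent. -/
theorem vandermonde_with_basis_linearIndependent
    (F : Type*) [Field F] (γ δ : F) (hγ : γ ≠ 0) (hδ : δ ≠ 0) (hne : γ ≠ δ)
    (l : Fin 4) :
    LinearIndependent F
      ![(![1, γ, γ ^ 2, γ ^ 3] : Fin 4 → F), (![1, δ, δ ^ 2, δ ^ 3] : Fin 4 → F),
        (Pi.single l 1 : Fin 4 → F)] := by
  rw [Fintype.linearIndependent_iff]
  intro g hg
  have hsub : γ - δ ≠ 0 := sub_ne_zero.mpr hne
  have h0 := congrFun hg 0
  have h1 := congrFun hg 1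
  have h2 := congrFun hg 2
  have h3 := congrFun hg 3
  fin_cases l <;>
    simp (config := { decide := true }) [Fin.sum_univ_succ, Pi.single_apply, Fin.ext_iff] at h0 h1 h2 h3
  · -- l = 0
    have ha : g 0 * (γ * (γ - δ)) = 0 := by linear_combination h2 - δ * h1
    have ha0 : g 0 = 0 := by
      rcases mul_eq_zero.1 ha with h | h
      · exact h
      · exact absurd h (mul_ne_zero hγ hsub)
    have ha1 : g 1 = 0 := by
      have : g 1 * δ = 0 := by linear_combination h1 - γ * ha0
      rcases mul_eq_zero.1 this with h | h
      · exact h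
      · exact absurd h hδ
    have ha2 : g 2 = 0 := by linear_combination h0 - ha0 - ha1
    intro i; fin_cases i <;> assumption
  · -- l = 1
    have ha : g 0 * (γ ^ 2 * (γ - δ)) = 0 := by linear_combination h3 - δ * h2
    have ha0 : g 0 = 0 := by
      rcases mul_eq_zero.1 ha with h | h
      · exact h
      · exact absurd h (mul_ne_zero (pow_ne_zero 2 hγ) hsub)
    have ha1 : g 1 = 0 := by
      have : g 1 * δ ^ 2 = 0 := by linear_combination h2 - γ ^ 2 * ha0
      rcases mul_eq_zero.1 this with h | h
      · exact h
      · exact absurd h (pow_ne_zero 2 hδ)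
    have ha2 : g 2 = 0 := by linear_combination h1 - γ * ha0 - δ * ha1
    intro i; fin_cases i <;> assumption
  · -- l = 2
    have ha : g 0 * (γ - δ) = 0 := by linear_combination h1 - δ * h0
    have ha0 : g 0 = 0 := by
      rcases mul_eq_zero.1 ha with h | h
      · exact h
      · exact absurd h hsub
    have ha1 : g 1 = 0 := by linear_combination h0 - ha0
    have ha2 : g 2 = 0 := by linear_combination h2 - γ ^ 2 * ha0 - δ ^ 2 * ha1
    intro i; fin_cases i <;> assumption
  · -- l = 3
    have ha : g 0 * (γ - δ) = 0 := by linear_combination h1 - δ * h0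
    have ha0 : g 0 = 0 := by
      rcases mul_eq_zero.1 ha with h | h
      · exact h
      · exact absurd h hsub
    have ha1 : g 1 = 0 := by linear_combination h0 - ha0
    have ha2 : g 2 = 0 := by linear_combination h3 - γ ^ 3 * ha0 - δ ^ 3 * ha1
    intro i; fin_cases i <;> assumption
end

section
/- Let n ≥ 2 and M ≥ 1. The following are equivalent: (a) for all i ≠ j in {1,…,n} the four columns v_{i,1}, v_{i,2}, v_{j,1}, v_{j,2} are linearly independent, and for every i ∈ {1,…,n} and every l ∈ {1,…,M} the three vectors v_{i,1}, v_{i,2}, e_l are linearly independent; (b) the syndrome map (E, e) ↦ H·E + e is injective on the set of combined error vectors of weight at most 1 (i.e., whenever (E₁, e₁) and (E₂, e₂) each have weight at most 1 and H·E₁ + e₁ = H·E₂ + e₂, then (E₁, e₁) = (E₂, e₂)). (This is the decodability criterion of Theorem 2 for a single error on either a primary path or a protection path.) -/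
private lemma mulVec_pair' {F : Type*} [Field F] {n M : ℕ}
    (H : Matrix (Fin M) (Fin n × Fin 2) F) (E : Fin n × Fin 2 → F) (i : Fin n)
    (hE : ∀ p : Fin n × Fin 2, p.1 ≠ i → E p = 0) :
    H.mulVec E = E (i, 0) • (fun r => H r (i, 0)) + E (i, 1) • (fun r => H r (i, 1)) := by
  funext r
  simp only [Matrix.mulVec, dotProduct, Pi.add_apply, Pi.smul_apply, smul_eq_mul]
  rw [Fintype.sum_prod_type, Finset.sum_eq_single i]
  · rw [Fin.sum_univ_two]; ring
  · intro j _ hj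
    have h0 : ∀ s : Fin 2, E (j, s) = 0 := fun s => hE (j, s) hj
    simp [h0]
  · intro h; exact absurd (Finset.mem_univ i) h

private lemma exists_single_support' {α : Type*} [Fintype α] (a₀ : α) (P : α → Prop)
    [DecidablePred P] (h : (Finset.univ.filter P).card ≤ 1) :
    ∃ a, ∀ b, b ≠ a → ¬ P b := by
  rcases (Finset.univ.filter P).eq_empty_or_nonempty with he | ⟨a, ha⟩
  · refine ⟨a₀, fun b _ hb => ?_⟩
    have : b ∈ Finset.univ.filter P := Finset.mem_filter.2 ⟨Finset.mem_univ _, hb⟩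
    simp [he] at this
  · refine ⟨a, fun b hb hPb => hb ?_⟩
    exact Finset.card_le_one.mp h b (Finset.mem_filter.2 ⟨Finset.mem_univ _, hPb⟩) a ha

private lemma classify' {F : Type*} [Field F] [DecidableEq F] {n M : ℕ} (hn : 0 < n) (hM : 0 < M)
    (E : Fin n × Fin 2 → F) (e : Fin M → F)
    (hw : (Finset.univ.filter (fun i : Fin n => E (i, 0) ≠ 0 ∨ E (i, 1) ≠ 0)).card +
        (Finset.univ.filter (fun l : Fin M => e l ≠ 0)).card ≤ 1) :
    (E = 0 ∧ ∃ l : Fin M, ∀ m, m ≠ l → e m = 0) ∨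
    (e = 0 ∧ ∃ i : Fin n, ∀ p : Fin n × Fin 2, p.1 ≠ i → E p = 0) := by
  have hor : (Finset.univ.filter (fun i : Fin n => E (i, 0) ≠ 0 ∨ E (i, 1) ≠ 0)).card = 0 ∨
      (Finset.univ.filter (fun l : Fin M => e l ≠ 0)).card = 0 := by omega
  rcases hor with h | h
  · left
    have hfe := Finset.card_eq_zero.mp h
    have hall : ∀ i : Fin n, ¬ (E (i, 0) ≠ 0 ∨ E (i, 1) ≠ 0) := by
      intro i hi
      have : i ∈ Finset.univ.filter (fun i : Fin n => E (i, 0) ≠ 0 ∨ E (i, 1) ≠ 0) :=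
        Finset.mem_filter.2 ⟨Finset.mem_univ _, hi⟩
      simp [hfe] at this
    constructor
    · funext p
      obtain ⟨pi, ps⟩ := p
      have := hall pi
      push_neg at this
      fin_cases ps
      · exact this.1
      · exact this.2
    · obtain ⟨l, hl⟩ := exists_single_support' (⟨0, hM⟩ : Fin M) (fun l => e l ≠ 0) (by omega)
      exact ⟨l, fun m hm => not_not.mp (hl m hm)⟩
  · right
    have hfe := Finset.card_eq_zero.mp h
    constructor
    · funext m
      by_contra hm
      have : m ∈ Finset.univ.filter (fun l : Fin M => e l ≠ 0) :=
        Finset.mem_filter.2 ⟨Finset.mem_univ _, hm⟩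
      simp [hfe] at this
    · obtain ⟨i, hi⟩ := exists_single_support' (⟨0, hn⟩ : Fin n) _ (by omega : (Finset.univ.filter (fun i : Fin n => E (i, 0) ≠ 0 ∨ E (i, 1) ≠ 0)).card ≤ 1)
      refine ⟨i, fun p hp => ?_⟩
      obtain ⟨pj, ps⟩ := p
      have := hi pj hp
      push_neg at this
      fin_cases ps
      · exact this.1
      · exact this.2

private lemma E_eq_zero' {F : Type*} [Field F] {n : ℕ} (E : Fin n × Fin 2 → F) (i : Fin n)
    (hE : ∀ p : Fin n × Fin 2, p.1 ≠ i → E p = 0) (h0 : E (i, 0) = 0) (h1 : E (i, 1) = 0) :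
    E = 0 := by
  funext p
  obtain ⟨pj, ps⟩ := p
  by_cases hpj : pj = i
  · subst hpj
    fin_cases ps
    · exact h0
    · exact h1
  · exact hE (pj, ps) hpj

private lemma e_eq_zero' {F : Type*} [Field F] {M : ℕ} (e : Fin M → F) (l : Fin M)
    (hl : ∀ m, m ≠ l → e m = 0) (h0 : e l = 0) : e = 0 := by
  funext m
  by_cases hm : m = l
  · subst hm; exact h0
  · exact hl m hm

/-- **Theorem 2 (single error on a primary or protection path).**
The following are equivalent:
(a) for all `i ≠ j` the four columns `v_{i,1}, v_{i,2}, v_{j,1}, v_{j,2}` of `H` are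
linearly independent, and for every `i` and every `l ∈ {1,…,M}` the three vectors
`v_{i,1}, v_{i,2}, e_l` are linearly independent;
(b) the syndrome map `(E, e) ↦ H·E + e` is injective on combined error vectors of
weight at most `1`, where the weight of `(E, e)` is the pair-weight of `E` plus the
number of nonzero coordinates of `e`. -/
theorem single_error_primary_or_protection_decodability
    (F : Type*) [Field F] [DecidableEq F] (n M : ℕ) (hn : 2 ≤ n) (hM : 0 < M)
    (H : Matrix (Fin M) (Fin n × Fin 2) F) :
    ((∀ i j : Fin n, i ≠ j →
      LinearIndependent F
        ![(fun r => H r (i, 0) : Fin M → F), (fun r => H r (i, 1) : Fin M → F),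
          (fun r => H r (j, 0) : Fin M → F), (fun r => H r (j, 1) : Fin M → F)]) ∧
     (∀ i : Fin n, ∀ l : Fin M,
      LinearIndependent F
        ![(fun r => H r (i, 0) : Fin M → F), (fun r => H r (i, 1) : Fin M → F),
          (Pi.single l 1 : Fin M → F)])) ↔
    (∀ E₁ : Fin n × Fin 2 → F, ∀ e₁ : Fin M → F, ∀ E₂ : Fin n × Fin 2 → F, ∀ e₂ : Fin M → F,
      (Finset.univ.filter (fun i : Fin n => E₁ (i, 0) ≠ 0 ∨ E₁ (i, 1) ≠ 0)).card +
        (Finset.univ.filter (fun l : Fin M => e₁ l ≠ 0)).card ≤ 1 →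
      (Finset.univ.filter (fun i : Fin n => E₂ (i, 0) ≠ 0 ∨ E₂ (i, 1) ≠ 0)).card +
        (Finset.univ.filter (fun l : Fin M => e₂ l ≠ 0)).card ≤ 1 →
      H.mulVec E₁ + e₁ = H.mulVec E₂ + e₂ → E₁ = E₂ ∧ e₁ = e₂) := by
  have hn0 : 0 < n := by omega
  constructor
  · rintro ⟨h4, h3⟩ E₁ e₁ E₂ e₂ hw₁ hw₂ heq
    rcases classify' hn0 hM E₁ e₁ hw₁ with ⟨hE₁, l₁, hl₁⟩ | ⟨he₁, i₁, hi₁⟩ <;>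
      rcases classify' hn0 hM E₂ e₂ hw₂ with ⟨hE₂, l₂, hl₂⟩ | ⟨he₂, i₂, hi₂⟩
    · -- both e-type
      rw [hE₁, hE₂, Matrix.mulVec_zero] at heq
      simp only [zero_add] at heq
      exact ⟨hE₁.trans hE₂.symm, heq⟩
    · -- e-type vs E-type
      rw [hE₁, Matrix.mulVec_zero, he₂, mulVec_pair' H E₂ i₂ hi₂] at heq
      have hz := Fintype.linearIndependent_iff.mp (h3 i₂ l₁)
        ![E₂ (i₂, 0), E₂ (i₂, 1), -(e₁ l₁)] ?_
      · have h0 := hz 0; have h1 := hz 1; have h2 := hz 2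
        simp only [Matrix.cons_val_zero, Matrix.cons_val_one, Matrix.head_cons,
          Matrix.cons_val_two, Matrix.tail_cons, neg_eq_zero] at h0 h1 h2
        refine ⟨hE₁.trans (E_eq_zero' E₂ i₂ hi₂ h0 h1).symm,
          (e_eq_zero' e₁ l₁ hl₁ h2).trans he₂.symm⟩
      · funext r
        have h := congrFun heq r
        simp only [Pi.add_apply, Pi.smul_apply, Pi.zero_apply, smul_eq_mul,
          zero_add, add_zero] at h
        simp only [Finset.sum_apply, Fin.sum_univ_three, Matrix.cons_val_zero,
          Matrix.cons_val_one, Matrix.head_cons, Matrix.cons_val_two, Matrix.tail_cons,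
          Pi.smul_apply, smul_eq_mul, Pi.zero_apply]
        by_cases hr : r = l₁
        · subst hr
          rw [Pi.single_eq_same]
          linear_combination -h
        · rw [Pi.single_eq_of_ne hr, hl₁ r hr] at *
          linear_combination -h
    · -- E-type vs e-type
      rw [hE₂, Matrix.mulVec_zero, he₁, mulVec_pair' H E₁ i₁ hi₁] at heq
      have hz := Fintype.linearIndependent_iff.mp (h3 i₁ l₂)
        ![E₁ (i₁, 0), E₁ (i₁, 1), -(e₂ l₂)] ?_
      · have h0 := hz 0; have h1 := hz 1; have h2 := hz 2
        simp only [Matrix.cons_val_zero, Matrix.cons_val_one, Matrix.head_cons,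
          Matrix.cons_val_two, Matrix.tail_cons, neg_eq_zero] at h0 h1 h2
        refine ⟨(E_eq_zero' E₁ i₁ hi₁ h0 h1).trans hE₂.symm,
          he₁.trans (e_eq_zero' e₂ l₂ hl₂ h2).symm⟩
      · funext r
        have h := congrFun heq r
        simp only [Pi.add_apply, Pi.smul_apply, Pi.zero_apply, smul_eq_mul,
          zero_add, add_zero] at h
        simp only [Finset.sum_apply, Fin.sum_univ_three, Matrix.cons_val_zero,
          Matrix.cons_val_one, Matrix.head_cons, Matrix.cons_val_two, Matrix.tail_cons,
          Pi.smul_apply, smul_eq_mul, Pi.zero_apply]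
        by_cases hr : r = l₂
        · subst hr
          rw [Pi.single_eq_same]
          linear_combination h
        · rw [Pi.single_eq_of_ne hr, hl₂ r hr] at *
          linear_combination h
    · -- both E-type
      rw [he₁, he₂, mulVec_pair' H E₁ i₁ hi₁, mulVec_pair' H E₂ i₂ hi₂] at heq
      by_cases hij : i₁ = i₂
      · subst hij
        have hz := Fintype.linearIndependent_iff.mp (h3 i₁ ⟨0, hM⟩)
          ![E₁ (i₁, 0) - E₂ (i₁, 0), E₁ (i₁, 1) - E₂ (i₁, 1), 0] ?_
        · have h0 := hz 0; have h1 := hz 1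
          simp only [Matrix.cons_val_zero, Matrix.cons_val_one, Matrix.head_cons,
            sub_eq_zero] at h0 h1
          refine ⟨?_, he₁.trans he₂.symm⟩
          funext p
          obtain ⟨pj, ps⟩ := p
          by_cases hpj : pj = i₁
          · subst hpj
            fin_cases ps
            · exact h0
            · exact h1
          · rw [hi₁ (pj, ps) hpj, hi₂ (pj, ps) hpj]
        · funext r
          have h := congrFun heq r
          simp only [Pi.add_apply, Pi.smul_apply, Pi.zero_apply, smul_eq_mul,
            zero_add, add_zero] at h
          simp only [Finset.sum_apply, Fin.sum_univ_three, Matrix.cons_val_zero,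
            Matrix.cons_val_one, Matrix.head_cons, Matrix.cons_val_two, Matrix.tail_cons,
            Pi.smul_apply, smul_eq_mul, Pi.zero_apply]
          linear_combination h
      · have hz := Fintype.linearIndependent_iff.mp (h4 i₁ i₂ hij)
          ![E₁ (i₁, 0), E₁ (i₁, 1), -(E₂ (i₂, 0)), -(E₂ (i₂, 1))] ?_
        · have h0 := hz 0; have h1 := hz 1; have h2 := hz 2; have h3' := hz 3
          simp only [Matrix.cons_val_zero, Matrix.cons_val_one, Matrix.head_cons,
            Matrix.cons_val_two, Matrix.tail_cons, Matrix.cons_val_three, neg_eq_zero]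
            at h0 h1 h2 h3'
          refine ⟨(E_eq_zero' E₁ i₁ hi₁ h0 h1).trans (E_eq_zero' E₂ i₂ hi₂ h2 h3').symm,
            he₁.trans he₂.symm⟩
        · funext r
          have h := congrFun heq r
          simp only [Pi.add_apply, Pi.smul_apply, Pi.zero_apply, smul_eq_mul,
            zero_add, add_zero] at h
          simp only [Finset.sum_apply, Fin.sum_univ_four, Matrix.cons_val_zero,
            Matrix.cons_val_one, Matrix.head_cons, Matrix.cons_val_two, Matrix.tail_cons,
            Matrix.cons_val_three, Pi.smul_apply, smul_eq_mul, Pi.zero_apply]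
          linear_combination h
  · intro hinj
    constructor
    · intro i j hij
      rw [Fintype.linearIndependent_iff]
      intro g hg
      set E₁ : Fin n × Fin 2 → F := fun p => if p.1 = i then ![g 0, g 1] p.2 else 0 with hE₁def
      set E₂ : Fin n × Fin 2 → F := fun p => if p.1 = j then ![-g 2, -g 3] p.2 else 0 with hE₂def
      have hsuppE₁ : ∀ p : Fin n × Fin 2, p.1 ≠ i → E₁ p = 0 := by
        intro p hp; simp [hE₁def, hp]
      have hsuppE₂ : ∀ p : Fin n × Fin 2, p.1 ≠ j → E₂ p = 0 := by
        intro p hp; simp [hE₂def, hp]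
      have key := hinj E₁ 0 E₂ 0 ?_ ?_ ?_
      · have hE := key.1
        have q0 := congrFun hE (i, 0); have q1 := congrFun hE (i, 1)
        have q2 := congrFun hE (j, 0); have q3 := congrFun hE (j, 1)
        simp [hE₁def, hE₂def, hij, Ne.symm hij] at q0 q1 q2 q3
        intro k
        fin_cases k
        · simpa using q0
        · simpa using q1
        · simpa using q2
        · simpa using q3
      · have hb : (Finset.univ.filter (fun x : Fin n => E₁ (x, 0) ≠ 0 ∨ E₁ (x, 1) ≠ 0)).card ≤ 1 := by
          refine le_trans (Finset.card_le_card (fun x hx => ?_)) (le_of_eq (Finset.card_singleton i))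
          simp only [Finset.mem_filter, Finset.mem_singleton] at hx ⊢
          by_contra hxi
          rcases hx.2 with h | h <;> exact h (hsuppE₁ _ hxi)
        have hc : (Finset.univ.filter (fun l' : Fin M => (0 : Fin M → F) l' ≠ 0)).card = 0 := by
          simp
        omega
      · have hb : (Finset.univ.filter (fun x : Fin n => E₂ (x, 0) ≠ 0 ∨ E₂ (x, 1) ≠ 0)).card ≤ 1 := by
          refine le_trans (Finset.card_le_card (fun x hx => ?_)) (le_of_eq (Finset.card_singleton j))
          simp only [Finset.mem_filter, Finset.mem_singleton] at hx ⊢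
          by_contra hxj
          rcases hx.2 with h | h <;> exact h (hsuppE₂ _ hxj)
        have hc : (Finset.univ.filter (fun l' : Fin M => (0 : Fin M → F) l' ≠ 0)).card = 0 := by
          simp
        omega
      · rw [mulVec_pair' H E₁ i hsuppE₁, mulVec_pair' H E₂ j hsuppE₂]
        funext r
        have h := congrFun hg r
        simp only [Finset.sum_apply, Fin.sum_univ_four, Matrix.cons_val_zero,
          Matrix.cons_val_one, Matrix.head_cons, Matrix.cons_val_two, Matrix.tail_cons,
          Matrix.cons_val_three, Pi.smul_apply, smul_eq_mul, Pi.zero_apply] at h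
        simp only [hE₁def, hE₂def, Pi.add_apply, Pi.smul_apply, smul_eq_mul, Pi.zero_apply,
          add_zero, if_pos rfl, Matrix.cons_val_zero, Matrix.cons_val_one, Matrix.head_cons]
        linear_combination h
    · intro i l
      rw [Fintype.linearIndependent_iff]
      intro g hg
      set E₁ : Fin n × Fin 2 → F := fun p => if p.1 = i then ![g 0, g 1] p.2 else 0 with hE₁def
      set e₂ : Fin M → F := Pi.single l (-g 2) with he₂def
      have hsuppE₁ : ∀ p : Fin n × Fin 2, p.1 ≠ i → E₁ p = 0 := by
        intro p hp; simp [hE₁def, hp]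
      have key := hinj E₁ 0 0 e₂ ?_ ?_ ?_
      · have hE := key.1
        have q0 := congrFun hE (i, 0); have q1 := congrFun hE (i, 1)
        have q2 := congrFun key.2 l
        simp [hE₁def, he₂def] at q0 q1 q2
        intro k
        fin_cases k
        · simpa using q0
        · simpa using q1
        · simpa using q2
      · have hb : (Finset.univ.filter (fun x : Fin n => E₁ (x, 0) ≠ 0 ∨ E₁ (x, 1) ≠ 0)).card ≤ 1 := by
          refine le_trans (Finset.card_le_card (fun x hx => ?_)) (le_of_eq (Finset.card_singleton i))
          simp only [Finset.mem_filter, Finset.mem_singleton] at hx ⊢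
          by_contra hxi
          rcases hx.2 with h | h <;> exact h (hsuppE₁ _ hxi)
        have hc : (Finset.univ.filter (fun l' : Fin M => (0 : Fin M → F) l' ≠ 0)).card = 0 := by
          simp
        omega
      · have hb : (Finset.univ.filter (fun x : Fin n => (0 : Fin n × Fin 2 → F) (x, 0) ≠ 0 ∨ (0 : Fin n × Fin 2 → F) (x, 1) ≠ 0)).card = 0 := by
          simp
        have hc : (Finset.univ.filter (fun l' : Fin M => e₂ l' ≠ 0)).card ≤ 1 := by
          refine le_trans (Finset.card_le_card (fun x hx => ?_)) (le_of_eq (Finset.card_singleton l))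
          simp only [Finset.mem_filter, Finset.mem_singleton] at hx ⊢
          by_contra hxl
          exact hx.2 (by simp [he₂def, Pi.single_eq_of_ne hxl])
        omega
      · rw [mulVec_pair' H E₁ i hsuppE₁, Matrix.mulVec_zero]
        funext r
        have h := congrFun hg r
        simp only [Finset.sum_apply, Fin.sum_univ_three, Matrix.cons_val_zero,
          Matrix.cons_val_one, Matrix.head_cons, Matrix.cons_val_two, Matrix.tail_cons,
          Pi.smul_apply, smul_eq_mul, Pi.zero_apply] at h
        simp only [hE₁def, he₂def, Pi.add_apply, Pi.smul_apply, smul_eq_mul, Pi.zero_apply,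
          add_zero, zero_add, if_pos rfl, Matrix.cons_val_zero, Matrix.cons_val_one,
          Matrix.head_cons]
        by_cases hr : r = l
        · subst hr
          rw [Pi.single_eq_same] at h ⊢
          linear_combination h
        · rw [Pi.single_eq_of_ne hr] at h ⊢
          linear_combination h
end

section
/- Let n_e be a natural number. The following are equivalent: (a) for every subset P ⊆ {1,…,n} and every subset L ⊆ {1,…,M} with |P| + |L| ≤ 2·n_e, the family of columns {v_{i,1}, v_{i,2} : i ∈ P} ∪ {e_l : l ∈ L} is linearly independent over F; (b) the syndrome map (E, e) ↦ H·E + e is injective on the set of combined error vectors of weight at most n_e (i.e., whenever (E₁, e₁) and (E₂, e₂) each have weight at most n_e and H·E₁ + e₁ = H·E₂ + e₂, then (E₁, e₁) = (E₂, e₂)). (This is the decodability criterion of Theorem 3 for at most n_e errors on primary or protection paths.) -/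
lemma sum_eq_mulVec_aux {F : Type*} [Field F] {n M : ℕ}
    (H : Matrix (Fin M) (Fin n × Fin 2) F)
    (P : Finset (Fin n)) (L : Finset (Fin M)) (E : Fin n × Fin 2 → F) (e : Fin M → F)
    (hE : ∀ q : Fin n × Fin 2, q.1 ∉ P → E q = 0) (he : ∀ l, l ∉ L → e l = 0) :
    (∑ x : ↥P × Fin 2 ⊕ ↥L,
      Sum.elim (fun p : ↥P × Fin 2 => E ((p.1 : Fin n), p.2)) (fun l : ↥L => e (l : Fin M)) x •
      Sum.elim (fun p : ↥P × Fin 2 => (fun r => H r ((p.1 : Fin n), p.2) : Fin M → F))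
        (fun l : ↥L => (Pi.single (l : Fin M) 1 : Fin M → F)) x)
    = H.mulVec E + e := by
  funext r
  simp only [Finset.sum_apply, Pi.add_apply, Pi.smul_apply, Sum.elim_inl, Sum.elim_inr,
    smul_eq_mul, Fintype.sum_sum_type, Matrix.mulVec, dotProduct]
  congr 1
  · rw [Fintype.sum_prod_type]
    rw [show (∑ i : ↥P, ∑ s : Fin 2, E ((i : Fin n), s) * H r ((i : Fin n), s))
        = ∑ i ∈ P, ∑ s : Fin 2, E (i, s) * H r (i, s) from
        Finset.sum_coe_sort P (fun i => ∑ s : Fin 2, E (i, s) * H r (i, s))]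
    rw [Finset.sum_subset (Finset.subset_univ P)]
    · rw [Fintype.sum_prod_type]
      exact Finset.sum_congr rfl fun i _ => Finset.sum_congr rfl fun s _ => mul_comm _ _
    · intro i _ hi
      simp [hE (i, _) hi]
  · rw [Finset.sum_coe_sort L (fun l => e l * (Pi.single l (1:F) : Fin M → F) r)]
    simp only [Pi.single_apply, mul_ite, mul_one, mul_zero]
    rw [Finset.sum_ite_eq L r e]
    by_cases hr : r ∈ L
    · simp [hr]
    · simp [hr, he r hr]

/-- **Theorem 3 (multiple errors on primary or protection paths).**
The following are equivalent:
(a) for every `P ⊆ {1,…,n}` and `L ⊆ {1,…,M}` with `|P| + |L| ≤ 2·n_e`, the family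
of columns `{v_{i,1}, v_{i,2} : i ∈ P} ∪ {e_l : l ∈ L}` is linearly independent;
(b) the syndrome map `(E, e) ↦ H·E + e` is injective on combined error vectors of
weight at most `n_e`. -/
theorem multiple_error_decodability
    (F : Type*) [Field F] [DecidableEq F] (n M : ℕ) (hn : 0 < n) (hM : 0 < M)
    (ne : ℕ) (H : Matrix (Fin M) (Fin n × Fin 2) F) :
    (∀ P : Finset (Fin n), ∀ L : Finset (Fin M), P.card + L.card ≤ 2 * ne →
      LinearIndependent F
        (Sum.elim
          (fun p : ↥P × Fin 2 => (fun r => H r ((p.1 : Fin n), p.2) : Fin M → F))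
          (fun l : ↥L => (Pi.single (l : Fin M) 1 : Fin M → F)))) ↔
    (∀ E₁ : Fin n × Fin 2 → F, ∀ e₁ : Fin M → F, ∀ E₂ : Fin n × Fin 2 → F, ∀ e₂ : Fin M → F,
      (Finset.univ.filter (fun i : Fin n => E₁ (i, 0) ≠ 0 ∨ E₁ (i, 1) ≠ 0)).card +
        (Finset.univ.filter (fun l : Fin M => e₁ l ≠ 0)).card ≤ ne →
      (Finset.univ.filter (fun i : Fin n => E₂ (i, 0) ≠ 0 ∨ E₂ (i, 1) ≠ 0)).card +
        (Finset.univ.filter (fun l : Fin M => e₂ l ≠ 0)).card ≤ ne →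
      H.mulVec E₁ + e₁ = H.mulVec E₂ + e₂ → E₁ = E₂ ∧ e₁ = e₂) := by
  constructor
  · -- (a) → (b)
    intro ha E₁ e₁ E₂ e₂ h1 h2 hsyn
    set E : Fin n × Fin 2 → F := E₁ - E₂ with hE
    set e : Fin M → F := e₁ - e₂ with he
    set P : Finset (Fin n) := Finset.univ.filter (fun i => E (i, 0) ≠ 0 ∨ E (i, 1) ≠ 0) with hP
    set L : Finset (Fin M) := Finset.univ.filter (fun l => e l ≠ 0) with hL
    have hEout : ∀ q : Fin n × Fin 2, q.1 ∉ P → E q = 0 := by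
      rintro ⟨i, s⟩ hi
      simp only [hP, Finset.mem_filter, Finset.mem_univ, true_and, not_or, not_not] at hi
      fin_cases s
      · exact hi.1
      · exact hi.2
    have heout : ∀ l, l ∉ L → e l = 0 := by
      intro l hl
      simp only [hL, Finset.mem_filter, Finset.mem_univ, true_and, not_not] at hl
      exact hl
    -- card bound
    have hcard : P.card + L.card ≤ 2 * ne := by
      have hPsub : P ⊆ (Finset.univ.filter (fun i : Fin n => E₁ (i, 0) ≠ 0 ∨ E₁ (i, 1) ≠ 0)) ∪
          (Finset.univ.filter (fun i : Fin n => E₂ (i, 0) ≠ 0 ∨ E₂ (i, 1) ≠ 0)) := by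
        intro i hi
        simp only [hP, hE, Pi.sub_apply, Finset.mem_filter, Finset.mem_univ, true_and,
          Finset.mem_union] at hi ⊢
        by_contra hcon
        push_neg at hcon
        obtain ⟨⟨a1, a2⟩, ⟨b1, b2⟩⟩ := hcon
        rcases hi with h | h <;> simp_all
      have hLsub : L ⊆ (Finset.univ.filter (fun l : Fin M => e₁ l ≠ 0)) ∪
          (Finset.univ.filter (fun l : Fin M => e₂ l ≠ 0)) := by
        intro l hl
        simp only [hL, he, Pi.sub_apply, Finset.mem_filter, Finset.mem_univ, true_and,
          Finset.mem_union] at hl ⊢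
        by_contra hcon
        push_neg at hcon
        simp_all
      have := Finset.card_le_card hPsub
      have := Finset.card_le_card hLsub
      have := Finset.card_union_le
        (Finset.univ.filter (fun i : Fin n => E₁ (i, 0) ≠ 0 ∨ E₁ (i, 1) ≠ 0))
        (Finset.univ.filter (fun i : Fin n => E₂ (i, 0) ≠ 0 ∨ E₂ (i, 1) ≠ 0))
      have := Finset.card_union_le
        (Finset.univ.filter (fun l : Fin M => e₁ l ≠ 0))
        (Finset.univ.filter (fun l : Fin M => e₂ l ≠ 0))
      omega
    have hli := ha P L hcard
    rw [Fintype.linearIndependent_iff] at hli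
    have hzero : H.mulVec E + e = 0 := by
      rw [hE, he, Matrix.mulVec_sub]
      have : H.mulVec E₁ + e₁ - (H.mulVec E₂ + e₂) = 0 := by rw [hsyn]; abel
      calc H.mulVec E₁ - H.mulVec E₂ + (e₁ - e₂)
          = H.mulVec E₁ + e₁ - (H.mulVec E₂ + e₂) := by abel
        _ = 0 := this
    have hg := hli (Sum.elim (fun p : ↥P × Fin 2 => E ((p.1 : Fin n), p.2))
        (fun l : ↥L => e (l : Fin M)))
      (by rw [sum_eq_mulVec_aux H P L E e hEout heout]; exact hzero)
    have hEzero : E = 0 := by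
      funext q
      by_cases hq : q.1 ∈ P
      · have := hg (Sum.inl (⟨q.1, hq⟩, q.2))
        simpa using this
      · exact hEout q hq
    have hezero : e = 0 := by
      funext l
      by_cases hlm : l ∈ L
      · have := hg (Sum.inr ⟨l, hlm⟩)
        simpa using this
      · exact heout l hlm
    exact ⟨sub_eq_zero.mp hEzero, sub_eq_zero.mp hezero⟩
  · -- (b) → (a)
    intro hb P L hcard
    rw [Fintype.linearIndependent_iff]
    intro g hg
    obtain ⟨P₁, hP₁sub, hP₁card⟩ := Finset.exists_subset_card_eq (s := P) (n := min P.card ne)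
      (min_le_left _ _)
    obtain ⟨L₁, hL₁sub, hL₁card⟩ := Finset.exists_subset_card_eq (s := L)
      (n := min L.card (ne - min P.card ne)) (min_le_left _ _)
    set Ef : Fin n × Fin 2 → F :=
      fun q => if h : q.1 ∈ P then g (Sum.inl (⟨q.1, h⟩, q.2)) else 0 with hEf
    set ef : Fin M → F := fun l => if h : l ∈ L then g (Sum.inr ⟨l, h⟩) else 0 with hef
    set E₁ : Fin n × Fin 2 → F := fun q => if q.1 ∈ P₁ then Ef q else 0 with hE₁
    set E₂ : Fin n × Fin 2 → F := fun q => if q.1 ∈ P₁ then 0 else -Ef q with hE₂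
    set e₁ : Fin M → F := fun l => if l ∈ L₁ then ef l else 0 with he₁
    set e₂ : Fin M → F := fun l => if l ∈ L₁ then 0 else -ef l with he₂
    have hEdiff : E₁ - E₂ = Ef := by
      funext q
      simp only [hE₁, hE₂, Pi.sub_apply]
      by_cases h : q.1 ∈ P₁ <;> simp [h]
    have hediff : e₁ - e₂ = ef := by
      funext l
      simp only [he₁, he₂, Pi.sub_apply]
      by_cases h : l ∈ L₁ <;> simp [h]
    have hEfout : ∀ q : Fin n × Fin 2, q.1 ∉ P → Ef q = 0 := by
      intro q hq; simp [hEf, hq]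
    have hefout : ∀ l, l ∉ L → ef l = 0 := by
      intro l hl; simp [hef, hl]
    have hsum : H.mulVec Ef + ef = 0 := by
      rw [← sum_eq_mulVec_aux H P L Ef ef hEfout hefout, ← hg]
      apply Finset.sum_congr rfl
      rintro (⟨⟨i, hi⟩, s⟩ | ⟨l, hl⟩) _
      · simp [hEf, hi]
      · simp [hef, hl]
    have hsyn : H.mulVec E₁ + e₁ = H.mulVec E₂ + e₂ := by
      have : H.mulVec E₁ + e₁ - (H.mulVec E₂ + e₂) = 0 := by
        calc H.mulVec E₁ + e₁ - (H.mulVec E₂ + e₂)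
            = H.mulVec (E₁ - E₂) + (e₁ - e₂) := by rw [Matrix.mulVec_sub]; abel
          _ = 0 := by rw [hEdiff, hediff, hsum]
      have h' := sub_eq_zero.mp this
      exact h'
    have hw1 : (Finset.univ.filter (fun i : Fin n => E₁ (i, 0) ≠ 0 ∨ E₁ (i, 1) ≠ 0)).card +
        (Finset.univ.filter (fun l : Fin M => e₁ l ≠ 0)).card ≤ ne := by
      have hs1 : (Finset.univ.filter (fun i : Fin n => E₁ (i, 0) ≠ 0 ∨ E₁ (i, 1) ≠ 0)) ⊆ P₁ := by
        intro i hi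
        simp only [Finset.mem_filter, Finset.mem_univ, true_and] at hi
        by_contra h
        simp [hE₁, h] at hi
      have hs2 : (Finset.univ.filter (fun l : Fin M => e₁ l ≠ 0)) ⊆ L₁ := by
        intro l hl
        simp only [Finset.mem_filter, Finset.mem_univ, true_and] at hl
        by_contra h
        simp [he₁, h] at hl
      have := Finset.card_le_card hs1
      have := Finset.card_le_card hs2
      omega
    have hw2 : (Finset.univ.filter (fun i : Fin n => E₂ (i, 0) ≠ 0 ∨ E₂ (i, 1) ≠ 0)).card +
        (Finset.univ.filter (fun l : Fin M => e₂ l ≠ 0)).card ≤ ne := by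
      have hs1 : (Finset.univ.filter (fun i : Fin n => E₂ (i, 0) ≠ 0 ∨ E₂ (i, 1) ≠ 0)) ⊆ P \ P₁ := by
        intro i hi
        simp only [Finset.mem_filter, Finset.mem_univ, true_and] at hi
        rw [Finset.mem_sdiff]
        by_cases h1 : i ∈ P₁
        · simp [hE₂, h1] at hi
        · refine ⟨?_, h1⟩
          by_contra h2
          have z0 := hEfout (i, 0) h2
          have z1 := hEfout (i, 1) h2
          simp [hE₂, h1, z0, z1] at hi
      have hs2 : (Finset.univ.filter (fun l : Fin M => e₂ l ≠ 0)) ⊆ L \ L₁ := by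
        intro l hl
        simp only [Finset.mem_filter, Finset.mem_univ, true_and] at hl
        rw [Finset.mem_sdiff]
        by_cases h1 : l ∈ L₁
        · simp [he₂, h1] at hl
        · refine ⟨?_, h1⟩
          by_contra h2
          simp [he₂, h1, hefout l h2] at hl
      have c1 := Finset.card_le_card hs1
      have c2 := Finset.card_le_card hs2
      rw [Finset.card_sdiff_of_subset hP₁sub] at c1
      rw [Finset.card_sdiff_of_subset hL₁sub] at c2
      omega
    obtain ⟨hEeq, heeq⟩ := hb E₁ e₁ E₂ e₂ hw1 hw2 hsyn
    have hEfzero : ∀ q, Ef q = 0 := by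
      intro q
      have := congrFun hEeq q
      by_cases h : q.1 ∈ P₁
      · simpa [hE₁, hE₂, h] using this
      · have : (0 : F) = -Ef q := by simpa [hE₁, hE₂, h] using this
        simpa using this.symm
    have hefzero : ∀ l, ef l = 0 := by
      intro l
      have := congrFun heeq l
      by_cases h : l ∈ L₁
      · simpa [he₁, he₂, h] using this
      · have : (0 : F) = -ef l := by simpa [he₁, he₂, h] using this
        simpa using this.symm
    rintro (⟨⟨i, hi⟩, s⟩ | ⟨l, hl⟩)
    · have := hEfzero (i, s)
      simpa [hEf, hi] using this
    · have := hefzero l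
      simpa [hef, hl] using this
end

section
/- Let n_e and n_f be natural numbers. The following are equivalent: (a) for every subset P ⊆ {1,…,n} and every subset L ⊆ {1,…,M} with |L| ≤ 2·n_e and |P| + |L| ≤ 2·n_e + n_f, the family of columns {v_{i,1}, v_{i,2} : i ∈ P} ∪ {e_l : l ∈ L} is linearly independent over F; (b) for every failure set S ⊆ {1,…,n} with |S| ≤ n_f, the syndrome map (E, e) ↦ H·E + e is injective on the set of combined error vectors (E, e) whose weight counted outside S (namely, the number of indices i ∉ S with (E_{i,1}, E_{i,2}) ≠ (0,0) plus the number of nonzero coordinates of e) is at most n_e, with the values of E on pairs indexed by S unrestricted. (This is the decodability criterion of Theorem 4 for at most n_e adversarial errors combined with at most n_f primary-path failures whose locations are known.) -/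
private lemma sum_helper {F : Type*} [Field F] {n M : ℕ}
    (H : Matrix (Fin M) (Fin n × Fin 2) F)
    (P : Finset (Fin n)) (L : Finset (Fin M))
    (c : Fin n × Fin 2 → F) (d : Fin M → F)
    (hc : ∀ p : Fin n × Fin 2, p.1 ∉ P → c p = 0)
    (hd : ∀ l, l ∉ L → d l = 0)
    (g : (↥P × Fin 2) ⊕ ↥L → F)
    (hg1 : ∀ a : ↥P × Fin 2, g (Sum.inl a) = c ((a.1 : Fin n), a.2))
    (hg2 : ∀ b : ↥L, g (Sum.inr b) = d b) :
    ∑ j, g j • (Sum.elim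
        (fun p : ↥P × Fin 2 => (fun r => H r ((p.1 : Fin n), p.2) : Fin M → F))
        (fun l : ↥L => (Pi.single (l : Fin M) 1 : Fin M → F))) j
      = H.mulVec c + d := by
  funext r
  rw [Finset.sum_apply, Pi.add_apply]
  rw [Fintype.sum_sum_type]
  simp only [Sum.elim_inl, Sum.elim_inr, hg1, hg2, Pi.smul_apply, smul_eq_mul]
  have h1 : (∑ a : ↥P × Fin 2, c ((a.1 : Fin n), a.2) * H r ((a.1 : Fin n), a.2))
      = H.mulVec c r := by
    have e1 : (∑ a : ↥P × Fin 2, c ((a.1 : Fin n), a.2) * H r ((a.1 : Fin n), a.2))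
        = ∑ i ∈ P, ∑ s : Fin 2, c (i, s) * H r (i, s) := by
      rw [Fintype.sum_prod_type]
      exact Finset.sum_coe_sort P (fun i => ∑ s : Fin 2, c (i, s) * H r (i, s))
    rw [e1, Finset.sum_subset (Finset.subset_univ P)]
    · rw [Matrix.mulVec, dotProduct, Fintype.sum_prod_type]
      simp [mul_comm]
    · intro i _ hi
      exact Finset.sum_eq_zero fun s _ => by rw [hc (i, s) hi, zero_mul]
  have h2 : (∑ b : ↥L, d (b : Fin M) * (Pi.single (b : Fin M) (1 : F) : Fin M → F) r)
      = d r := by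
    have e2 : (∑ b : ↥L, d (b : Fin M) * (Pi.single (b : Fin M) (1 : F) : Fin M → F) r)
        = ∑ l ∈ L, d l * (Pi.single l (1 : F) : Fin M → F) r :=
      Finset.sum_coe_sort L (fun l => d l * (Pi.single l (1 : F) : Fin M → F) r)
    rw [e2]
    simp only [Pi.single_apply, mul_ite, mul_one, mul_zero]
    rw [Finset.sum_ite_eq L r d]
    by_cases hr : r ∈ L
    · simp [hr]
    · simp [hr, hd r hr]
  rw [h1, h2]

/-- **Theorem 4 (combined errors and known failures).**
The following are equivalent:
(a) for every `P ⊆ {1,…,n}` and `L ⊆ {1,…,M}` with `|L| ≤ 2·n_e` and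
`|P| + |L| ≤ 2·n_e + n_f`, the family `{v_{i,1}, v_{i,2} : i ∈ P} ∪ {e_l : l ∈ L}`
is linearly independent;
(b) for every failure set `S ⊆ {1,…,n}` with `|S| ≤ n_f`, the syndrome map
`(E, e) ↦ H·E + e` is injective on combined error vectors whose weight counted
outside `S` is at most `n_e` (the values of `E` on pairs indexed by `S` being
unrestricted). -/
theorem error_and_failure_decodability
    (F : Type*) [Field F] [DecidableEq F] (n M : ℕ) (hn : 0 < n) (hM : 0 < M)
    (ne nf : ℕ) (H : Matrix (Fin M) (Fin n × Fin 2) F) :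
    (∀ P : Finset (Fin n), ∀ L : Finset (Fin M),
      L.card ≤ 2 * ne → P.card + L.card ≤ 2 * ne + nf →
      LinearIndependent F
        (Sum.elim
          (fun p : ↥P × Fin 2 => (fun r => H r ((p.1 : Fin n), p.2) : Fin M → F))
          (fun l : ↥L => (Pi.single (l : Fin M) 1 : Fin M → F)))) ↔
    (∀ S : Finset (Fin n), S.card ≤ nf →
      ∀ E₁ : Fin n × Fin 2 → F, ∀ e₁ : Fin M → F,
      ∀ E₂ : Fin n × Fin 2 → F, ∀ e₂ : Fin M → F,
      (Finset.univ.filter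
          (fun i : Fin n => i ∉ S ∧ (E₁ (i, 0) ≠ 0 ∨ E₁ (i, 1) ≠ 0))).card +
        (Finset.univ.filter (fun l : Fin M => e₁ l ≠ 0)).card ≤ ne →
      (Finset.univ.filter
          (fun i : Fin n => i ∉ S ∧ (E₂ (i, 0) ≠ 0 ∨ E₂ (i, 1) ≠ 0))).card +
        (Finset.univ.filter (fun l : Fin M => e₂ l ≠ 0)).card ≤ ne →
      H.mulVec E₁ + e₁ = H.mulVec E₂ + e₂ → E₁ = E₂ ∧ e₁ = e₂) := by
  constructor
  · -- (a) → (b)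
    intro ha S hS E₁ e₁ E₂ e₂ hw1 hw2 hsyn
    set Ev : Fin n × Fin 2 → F := E₁ - E₂ with hEv
    set ev : Fin M → F := e₁ - e₂ with hev
    set P : Finset (Fin n) :=
      Finset.univ.filter (fun i => Ev (i, 0) ≠ 0 ∨ Ev (i, 1) ≠ 0) with hPdef
    set L : Finset (Fin M) := Finset.univ.filter (fun l => ev l ≠ 0) with hLdef
    have hc : ∀ p : Fin n × Fin 2, p.1 ∉ P → Ev p = 0 := by
      rintro ⟨i, s⟩ hp
      simp only [hPdef, Finset.mem_filter, Finset.mem_univ, true_and, not_or,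
        not_not] at hp
      have h2 : ∀ t : Fin 2, t = 0 ∨ t = 1 := by decide
      rcases h2 s with rfl | rfl
      · exact hp.1
      · exact hp.2
    have hd : ∀ l, l ∉ L → ev l = 0 := by
      intro l hl
      simp only [hLdef, Finset.mem_filter, Finset.mem_univ, true_and,
        not_not] at hl
      exact hl
    -- card bounds
    have hLsub : L ⊆ (Finset.univ.filter (fun l => e₁ l ≠ 0)) ∪
        (Finset.univ.filter (fun l => e₂ l ≠ 0)) := by
      intro l hl
      simp only [hLdef, Finset.mem_filter, Finset.mem_univ, true_and,
        Finset.mem_union] at hl ⊢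
      by_contra hcon
      push_neg at hcon
      exact hl (by simp [hev, Pi.sub_apply, hcon.1, hcon.2])
    have hPsub : P ⊆ S ∪ (Finset.univ.filter
          (fun i : Fin n => i ∉ S ∧ (E₁ (i, 0) ≠ 0 ∨ E₁ (i, 1) ≠ 0))) ∪
        (Finset.univ.filter
          (fun i : Fin n => i ∉ S ∧ (E₂ (i, 0) ≠ 0 ∨ E₂ (i, 1) ≠ 0))) := by
      intro i hi
      simp only [hPdef, Finset.mem_filter, Finset.mem_univ, true_and] at hi
      simp only [Finset.mem_union, Finset.mem_filter, Finset.mem_univ, true_and]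
      by_cases hiS : i ∈ S
      · exact Or.inl (Or.inl hiS)
      · rcases hi with h | h
        · have : E₁ (i, 0) ≠ 0 ∨ E₂ (i, 0) ≠ 0 := by
            by_contra hcc
            push_neg at hcc
            exact h (by simp [hEv, Pi.sub_apply, hcc.1, hcc.2])
          rcases this with h' | h'
          · exact Or.inl (Or.inr ⟨hiS, Or.inl h'⟩)
          · exact Or.inr ⟨hiS, Or.inl h'⟩
        · have : E₁ (i, 1) ≠ 0 ∨ E₂ (i, 1) ≠ 0 := by
            by_contra hcc
            push_neg at hcc
            exact h (by simp [hEv, Pi.sub_apply, hcc.1, hcc.2])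
          rcases this with h' | h'
          · exact Or.inl (Or.inr ⟨hiS, Or.inr h'⟩)
          · exact Or.inr ⟨hiS, Or.inr h'⟩
    have hLcard : L.card ≤ 2 * ne := by
      have h1 := Finset.card_le_card hLsub
      have h2 := Finset.card_union_le (Finset.univ.filter (fun l => e₁ l ≠ 0))
        (Finset.univ.filter (fun l => e₂ l ≠ 0))
      omega
    have hPLcard : P.card + L.card ≤ 2 * ne + nf := by
      have h1 := Finset.card_le_card hPsub
      have h2 := Finset.card_union_le (S ∪ (Finset.univ.filter
          (fun i : Fin n => i ∉ S ∧ (E₁ (i, 0) ≠ 0 ∨ E₁ (i, 1) ≠ 0))))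
        (Finset.univ.filter
          (fun i : Fin n => i ∉ S ∧ (E₂ (i, 0) ≠ 0 ∨ E₂ (i, 1) ≠ 0)))
      have h3 := Finset.card_union_le S (Finset.univ.filter
          (fun i : Fin n => i ∉ S ∧ (E₁ (i, 0) ≠ 0 ∨ E₁ (i, 1) ≠ 0)))
      have h4 := Finset.card_le_card hLsub
      have h5 := Finset.card_union_le (Finset.univ.filter (fun l => e₁ l ≠ 0))
        (Finset.univ.filter (fun l => e₂ l ≠ 0))
      omega
    have li := ha P L hLcard hPLcard
    rw [Fintype.linearIndependent_iff] at li
    set g : (↥P × Fin 2) ⊕ ↥L → F :=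
      Sum.elim (fun a : ↥P × Fin 2 => Ev ((a.1 : Fin n), a.2))
        (fun b : ↥L => ev b) with hgdef
    have hsum := sum_helper H P L Ev ev hc hd g (fun a => rfl) (fun b => rfl)
    have hzero : ∀ j, g j = 0 := by
      apply li
      rw [hsum]
      have : H.mulVec Ev + ev
          = (H.mulVec E₁ + e₁) - (H.mulVec E₂ + e₂) := by
        rw [hEv, hev, Matrix.mulVec_sub]
        abel
      rw [this, hsyn, sub_self]
    have hE : E₁ = E₂ := by
      funext p
      obtain ⟨i, s⟩ := p
      have hz : Ev (i, s) = 0 := by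
        by_cases hi : i ∈ P
        · exact hzero (Sum.inl (⟨i, hi⟩, s))
        · exact hc (i, s) hi
      have : E₁ (i, s) - E₂ (i, s) = 0 := hz
      exact sub_eq_zero.mp this
    have he : e₁ = e₂ := by
      funext l
      have hz : ev l = 0 := by
        by_cases hl : l ∈ L
        · exact hzero (Sum.inr ⟨l, hl⟩)
        · exact hd l hl
      have : e₁ l - e₂ l = 0 := hz
      exact sub_eq_zero.mp this
    exact ⟨hE, he⟩
  · -- (b) → (a)
    intro hb P L hLcard hPLcard
    rw [Fintype.linearIndependent_iff]
    intro g hg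
    set c : Fin n × Fin 2 → F :=
      fun p => if h : p.1 ∈ P then g (Sum.inl (⟨p.1, h⟩, p.2)) else 0 with hcdef
    set d : Fin M → F :=
      fun l => if h : l ∈ L then g (Sum.inr ⟨l, h⟩) else 0 with hddef
    have hc : ∀ p : Fin n × Fin 2, p.1 ∉ P → c p = 0 := fun p hp => dif_neg hp
    have hd : ∀ l, l ∉ L → d l = 0 := fun l hl => dif_neg hl
    have hg1 : ∀ a : ↥P × Fin 2, g (Sum.inl a) = c ((a.1 : Fin n), a.2) := by
      intro a
      simp only [hcdef]
      rw [dif_pos a.1.2]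
    have hg2 : ∀ b : ↥L, g (Sum.inr b) = d b := by
      intro b
      simp only [hddef]
      rw [dif_pos b.2]
    have hsum := sum_helper H P L c d hc hd g hg1 hg2
    have hcd : H.mulVec c + d = 0 := by rw [← hsum]; exact hg
    -- construct the failure set and the split of the supports
    obtain ⟨S, hSP, hScard⟩ :=
      Finset.exists_subset_card_eq (min_le_left P.card nf)
    have hSnf : S.card ≤ nf := by omega
    set Q : Finset (Fin n) := P \ S with hQdef
    have hQcard : Q.card = P.card - min P.card nf := by
      rw [hQdef, Finset.card_sdiff_of_subset hSP, hScard]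
    obtain ⟨Q₁, hQ₁Q, hQ₁card⟩ :=
      Finset.exists_subset_card_eq (min_le_left Q.card ne)
    obtain ⟨L₁, hL₁L, hL₁card⟩ :=
      Finset.exists_subset_card_eq
        (min_le_left L.card (ne - min Q.card ne))
    set E₁ : Fin n × Fin 2 → F :=
      fun p => if p.1 ∈ S ∨ p.1 ∈ Q₁ then c p else 0 with hE₁def
    set e₁ : Fin M → F := fun l => if l ∈ L₁ then d l else 0 with he₁def
    set E₂ : Fin n × Fin 2 → F :=
      fun p => if p.1 ∈ Q \ Q₁ then -c p else 0 with hE₂def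
    set e₂ : Fin M → F := fun l => if l ∈ L \ L₁ then -d l else 0 with he₂def
    -- weight bounds
    have hw1a : Finset.univ.filter
        (fun i : Fin n => i ∉ S ∧ (E₁ (i, 0) ≠ 0 ∨ E₁ (i, 1) ≠ 0)) ⊆ Q₁ := by
      intro i hi
      simp only [Finset.mem_filter, Finset.mem_univ, true_and] at hi
      by_contra hn
      have hne : ¬(i ∈ S ∨ i ∈ Q₁) := fun h => h.elim hi.1 hn
      rcases hi.2 with h | h <;> exact h (if_neg hne)
    have hw1b : Finset.univ.filter (fun l : Fin M => e₁ l ≠ 0) ⊆ L₁ := by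
      intro l hl
      simp only [Finset.mem_filter, Finset.mem_univ, true_and] at hl
      by_contra hn
      exact hl (if_neg hn)
    have hw2a : Finset.univ.filter
        (fun i : Fin n => i ∉ S ∧ (E₂ (i, 0) ≠ 0 ∨ E₂ (i, 1) ≠ 0)) ⊆ Q \ Q₁ := by
      intro i hi
      simp only [Finset.mem_filter, Finset.mem_univ, true_and] at hi
      by_contra hn
      rcases hi.2 with h | h <;> exact h (if_neg hn)
    have hw2b : Finset.univ.filter (fun l : Fin M => e₂ l ≠ 0) ⊆ L \ L₁ := by
      intro l hl
      simp only [Finset.mem_filter, Finset.mem_univ, true_and] at hl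
      by_contra hn
      exact hl (if_neg hn)
    have hw1 : (Finset.univ.filter
        (fun i : Fin n => i ∉ S ∧ (E₁ (i, 0) ≠ 0 ∨ E₁ (i, 1) ≠ 0))).card +
        (Finset.univ.filter (fun l : Fin M => e₁ l ≠ 0)).card ≤ ne := by
      have h1 := Finset.card_le_card hw1a
      have h2 := Finset.card_le_card hw1b
      omega
    have hw2 : (Finset.univ.filter
        (fun i : Fin n => i ∉ S ∧ (E₂ (i, 0) ≠ 0 ∨ E₂ (i, 1) ≠ 0))).card +
        (Finset.univ.filter (fun l : Fin M => e₂ l ≠ 0)).card ≤ ne := by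
      have h1 := Finset.card_le_card hw2a
      have h2 := Finset.card_le_card hw2b
      have h3 : (Q \ Q₁).card = Q.card - Q₁.card := Finset.card_sdiff_of_subset hQ₁Q
      have h4 : (L \ L₁).card = L.card - L₁.card := Finset.card_sdiff_of_subset hL₁L
      omega
    -- the difference of the two error vectors is (c, d)
    have hEdiff : E₁ - E₂ = c := by
      funext p
      obtain ⟨i, s⟩ := p
      rw [Pi.sub_apply]
      by_cases h1 : i ∈ S ∨ i ∈ Q₁
      · have h2 : i ∉ Q \ Q₁ := by
          simp only [hQdef, Finset.mem_sdiff]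
          rcases h1 with h | h
          · tauto
          · have := hQ₁Q h
            simp only [hQdef, Finset.mem_sdiff] at this
            tauto
        simp only [hE₁def, hE₂def, if_pos h1, if_neg h2, sub_zero]
      · by_cases h2 : i ∈ Q \ Q₁
        · simp only [hE₁def, hE₂def, if_neg h1, if_pos h2, zero_sub, neg_neg]
        · have hiP : i ∉ P := by
            intro hiP
            push_neg at h1
            have hiQ : i ∈ Q := Finset.mem_sdiff.mpr ⟨hiP, h1.1⟩
            exact h2 (Finset.mem_sdiff.mpr ⟨hiQ, h1.2⟩)
          simp only [hE₁def, hE₂def, if_neg h1, if_neg h2, sub_zero,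
            hc (i, s) hiP]
    have hediff : e₁ - e₂ = d := by
      funext l
      rw [Pi.sub_apply]
      by_cases h1 : l ∈ L₁
      · have h2 : l ∉ L \ L₁ := fun hmem => (Finset.mem_sdiff.mp hmem).2 h1
        simp only [he₁def, he₂def, if_pos h1, if_neg h2, sub_zero]
      · by_cases h2 : l ∈ L \ L₁
        · simp only [he₁def, he₂def, if_neg h1, if_pos h2, zero_sub, neg_neg]
        · have hlL : l ∉ L := by
            intro hlL
            simp only [Finset.mem_sdiff] at h2
            tauto
          simp only [he₁def, he₂def, if_neg h1, if_neg h2, sub_zero, hd l hlL]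
    have hsyn : H.mulVec E₁ + e₁ = H.mulVec E₂ + e₂ := by
      have : (H.mulVec E₁ + e₁) - (H.mulVec E₂ + e₂) = H.mulVec c + d := by
        rw [← hEdiff, ← hediff, Matrix.mulVec_sub]
        abel
      have h0 : (H.mulVec E₁ + e₁) - (H.mulVec E₂ + e₂) = 0 := by rw [this, hcd]
      exact sub_eq_zero.mp h0
    obtain ⟨hE12, he12⟩ := hb S hSnf E₁ e₁ E₂ e₂ hw1 hw2 hsyn
    have hczero : c = 0 := by rw [← hEdiff, hE12, sub_self]
    have hdzero : d = 0 := by rw [← hediff, he12, sub_self]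
    intro j
    rcases j with a | b
    · rw [hg1 a, hczero]; rfl
    · rw [hg2 b, hdzero]; rfl
end

section
/- Let n_e and n_f be natural numbers with n ≥ 2·n_e + n_f. If for every subset P ⊆ {1,…,n} and every subset L ⊆ {1,…,M} with |L| ≤ 2·n_e and |P| + |L| ≤ 2·n_e + n_f the family of columns {v_{i,1}, v_{i,2} : i ∈ P} ∪ {e_l : l ∈ L} is linearly independent over F, then M ≥ 4·n_e + 2·n_f. (Thus at least 4·n_e + 2·n_f protection paths are necessary to satisfy the decodability condition of Theorem 4.) -/
/-- **Necessity of `M ≥ 4·n_e + 2·n_f` protection paths.** If `n ≥ 2·n_e + n_f` and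
for every `P ⊆ {1,…,n}`, `L ⊆ {1,…,M}` with `|L| ≤ 2·n_e` and
`|P| + |L| ≤ 2·n_e + n_f` the family `{v_{i,1}, v_{i,2} : i ∈ P} ∪ {e_l : l ∈ L}`
is linearly independent, then `M ≥ 4·n_e + 2·n_f`. -/
theorem protection_paths_necessary
    (F : Type*) [Field F] [DecidableEq F] (n M : ℕ) (hn : 0 < n) (hM : 0 < M)
    (ne nf : ℕ) (hnn : 2 * ne + nf ≤ n)
    (H : Matrix (Fin M) (Fin n × Fin 2) F)
    (hind : ∀ P : Finset (Fin n), ∀ L : Finset (Fin M),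
      L.card ≤ 2 * ne → P.card + L.card ≤ 2 * ne + nf →
      LinearIndependent F
        (Sum.elim
          (fun p : ↥P × Fin 2 => (fun r => H r ((p.1 : Fin n), p.2) : Fin M → F))
          (fun l : ↥L => (Pi.single (l : Fin M) 1 : Fin M → F)))) :
    4 * ne + 2 * nf ≤ M := by
  obtain ⟨P, hPsub, hPcard⟩ := Finset.exists_subset_card_eq
    (s := (Finset.univ : Finset (Fin n))) (by simpa using hnn)
  have h := hind P (∅ : Finset (Fin M)) (by simp) (by simp [hPcard])
  have hcard := h.fintype_card_le_finrank
  simp only [Fintype.card_sum, Fintype.card_prod, Fintype.card_coe, hPcard,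
    Fintype.card_fin, Finset.card_empty, Module.finrank_fintype_fun_eq_card] at hcard
  have : Fintype.card (↥(∅ : Finset (Fin M))) = 0 := by simp
  omega
end
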